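/- The graph F5 satisfies γ_e(F5) < γ(F5). -/

import Mathlib

open SimpleGraph

/-- `D` is a dominating set of `G`. -/
def IsDomSet {V : Type*} (G : SimpleGraph V) (D : Finset V) : Prop :=
  ∀ v : V, v ∉ D → ∃ u ∈ D, G.Adj u v

/-- The domination number of `G`. -/
noncomputable def domNum {V : Type*} (G : SimpleGraph V) [Fintype V] : ℕ :=
  sInf {n | ∃ D : Finset V, IsDomSet G D ∧ D.card = n}

open Classical in
/-- `D` contains exactly one endvertex of a path between `u` and `v`. -/
def endCond {V : Type*} (D : Finset V) (u v : V) : Prop :=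
  if u = v then u ∈ D else ((u ∈ D ∧ v ∉ D) ∨ (u ∉ D ∧ v ∈ D))

/-- `dist_{(G,D)}(u,v)`: the minimum length of a path in `G` between `u` and `v` such
that `D` contains exactly one endvertex and no internal vertex of the path;
`⊤` if no such path exists. -/
noncomputable def eDist {V : Type*} (G : SimpleGraph V) (D : Finset V) (u v : V) : ℕ∞ :=
  ⨅ (p : {p : G.Walk u v // p.IsPath ∧ endCond D u v ∧
      ∀ w ∈ p.support, w ≠ u → w ≠ v → w ∉ D}), (p.1.length : ℕ∞)

/-- `(1/2)^(d-1)` for `d : ℕ∞`, with `(1/2)^∞ = 0`. -/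
noncomputable def halfPow (d : ℕ∞) : ℝ :=
  if d = ⊤ then 0 else 2 * (1 / 2 : ℝ) ^ d.toNat

/-- The weight `w_{(G,D)}(u)`. -/
noncomputable def expWeight {V : Type*} (G : SimpleGraph V) (D : Finset V) (u : V) : ℝ :=
  ∑ v ∈ D, halfPow (eDist G D u v)

/-- `D` is an exponential dominating set of `G`. -/
def IsExpDomSet {V : Type*} (G : SimpleGraph V) (D : Finset V) : Prop :=
  ∀ u : V, 1 ≤ expWeight G D u

/-- The exponential domination number of `G`. -/
noncomputable def expDomNum {V : Type*} (G : SimpleGraph V) [Fintype V] : ℕ :=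
  sInf {n | ∃ D : Finset V, IsExpDomSet G D ∧ D.card = n}

/-- `G` is `H`-free: `G` has no induced subgraph isomorphic to `H`. -/
def Free {V W : Type*} (G : SimpleGraph V) (H : SimpleGraph W) : Prop :=
  ¬ Nonempty (H ↪g G)

/-- The graph on `Fin n` with the given edge list. -/
def graphOfList (n : ℕ) (l : List (Fin n × Fin n)) : SimpleGraph (Fin n) :=
  SimpleGraph.fromRel (fun a b => (a, b) ∈ l)

/-- The bull `B`. -/
def bull : SimpleGraph (Fin 5) := graphOfList 5 [(0,1),(1,2),(0,2),(0,3),(1,4)]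
/-- The diamond `D` (`K₄` minus an edge). -/
def diamond : SimpleGraph (Fin 4) := graphOfList 4 [(0,1),(0,2),(0,3),(1,2),(1,3)]
/-- The complete graph `K₄`. -/
def K4 : SimpleGraph (Fin 4) := ⊤
/-- The complete bipartite graph `K_{2,3}` with parts `{0,1}` and `{2,3,4}`. -/
def K23 : SimpleGraph (Fin 5) := graphOfList 5 [(0,2),(0,3),(0,4),(1,2),(1,3),(1,4)]
/-- The 2×3 grid `P₂ □ P₃`. -/
def P2P3 : SimpleGraph (Fin 2 × Fin 3) := (pathGraph 2) □ (pathGraph 3)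
/-- The path on 7 vertices. -/
def P7 : SimpleGraph (Fin 7) := pathGraph 7
/-- The cycle on 7 vertices. -/
def C7 : SimpleGraph (Fin 7) := cycleGraph 7
/-- `F₁`: the path `0-1-2` with pendant vertices `3,4,5` attached to `0,1,2`. -/
def F1 : SimpleGraph (Fin 6) := graphOfList 6 [(0,1),(1,2),(0,3),(1,4),(2,5)]
/-- `F₂`: a 4-cycle with a pendant path on 3 new vertices. -/
def F2 : SimpleGraph (Fin 7) := graphOfList 7 [(0,1),(1,2),(2,3),(3,0),(0,4),(4,5),(5,6)]
/-- `F₃`: a 4-cycle `0-1-2-3` and a 5-cycle `1-2-4-5-6` sharing exactly the edge `1-2`. -/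
def F3 : SimpleGraph (Fin 7) := graphOfList 7 [(0,1),(1,2),(2,3),(3,0),(2,4),(4,5),(5,6),(6,1)]
/-- `F₄`: two 4-cycles sharing exactly the vertex `0`. -/
def F4 : SimpleGraph (Fin 7) := graphOfList 7 [(0,1),(1,2),(2,3),(3,0),(0,4),(4,5),(5,6),(6,0)]
/-- `F₅`: vertices `u=0, v₁=1, v₂=2, w=3, a=4, b=5, z=6`. -/
def F5 : SimpleGraph (Fin 7) := graphOfList 7 [(0,1),(0,2),(1,3),(2,3),(1,4),(4,5),(5,2),(3,6)]

/-!
The set `{u, w}` exponentially dominates `F₅`: each of its vertices has weight at least `2`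
from itself, `v₁`, `v₂` and `z` are adjacent to a vertex of the set, and `a`, `b` reach `u` and
`w` by two different paths of length `2` avoiding the set, collecting `1/2 + 1/2`. On the other
hand no two vertices dominate `F₅`, which is checked by enumerating all subsets.
-/

open SimpleGraph

section ExpDomination

variable {V : Type*} {G : SimpleGraph V} {D : Finset V} {u v : V}

lemma halfPow_nonneg (d : ℕ∞) : 0 ≤ halfPow d := by
  unfold halfPow; split <;> positivity

lemma halfPow_natCast (n : ℕ) : halfPow n = 2 * (1 / 2 : ℝ) ^ n := by
  simp [halfPow]

lemma halfPow_antitone : Antitone halfPow := by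
  intro d d' h
  by_cases hd' : d' = ⊤
  · simpa [hd', halfPow] using halfPow_nonneg d
  · have hd : d ≠ ⊤ := ne_top_of_le_ne_top hd' h
    simp only [halfPow, if_neg hd, if_neg hd']
    have := pow_le_pow_of_le_one (by norm_num : (0 : ℝ) ≤ 1 / 2) (by norm_num)
      (ENat.toNat_le_toNat h hd')
    linarith

lemma endCond_self (hu : u ∈ D) : endCond D u u := by
  simp [endCond, hu]

lemma endCond_of_notMem_of_mem (hu : u ∉ D) (hv : v ∈ D) : endCond D u v := by
  have huv : u ≠ v := fun h => hu (h ▸ hv)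
  simp [endCond, huv, hu, hv]

lemma two_mul_half_pow_length_le_halfPow_eDist (p : G.Walk u v) (hp : p.IsPath)
    (he : endCond D u v) (hs : ∀ w ∈ p.support, w ≠ u → w ≠ v → w ∉ D) :
    2 * (1 / 2 : ℝ) ^ p.length ≤ halfPow (eDist G D u v) := by
  rw [← halfPow_natCast]
  exact halfPow_antitone (iInf_le (fun q : {q : G.Walk u v // q.IsPath ∧ endCond D u v ∧
    ∀ w ∈ q.support, w ≠ u → w ≠ v → w ∉ D} => (q.1.length : ℕ∞)) ⟨p, hp, he, hs⟩)

lemma halfPow_eDist_le_expWeight (hv : v ∈ D) : halfPow (eDist G D u v) ≤ expWeight G D u :=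
  Finset.single_le_sum (fun _ _ => halfPow_nonneg _) hv

lemma one_le_expWeight_of_mem (hu : u ∈ D) : 1 ≤ expWeight G D u := by
  have h := two_mul_half_pow_length_le_halfPow_eDist (G := G) Walk.nil Walk.IsPath.nil
    (endCond_self hu) (by simp)
  have := halfPow_eDist_le_expWeight (G := G) (u := u) hu
  simp only [Walk.length_nil, pow_zero] at h
  linarith

lemma one_le_expWeight_of_adj (hu : u ∉ D) (hv : v ∈ D) (huv : G.Adj u v) :
    1 ≤ expWeight G D u := by
  have h := two_mul_half_pow_length_le_halfPow_eDist huv.toWalk (Walk.IsPath.of_adj huv)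
    (endCond_of_notMem_of_mem hu hv) (by simp)
  have := halfPow_eDist_le_expWeight (G := G) (u := u) hv
  simp only [Adj.toWalk, Walk.length_cons, Walk.length_nil] at h
  linarith

lemma half_le_halfPow_eDist_of_adj_of_adj {x : V} (hu : u ∉ D) (hx : x ∉ D) (hv : v ∈ D)
    (hux : G.Adj u x) (hxv : G.Adj x v) : 1 / 2 ≤ halfPow (eDist G D u v) := by
  have huv : u ≠ v := fun h => hu (h ▸ hv)
  have h := two_mul_half_pow_length_le_halfPow_eDist (.cons hux (.cons hxv .nil))
    (by simp [Walk.cons_isPath_iff, hux.ne, hxv.ne, huv])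
    (endCond_of_notMem_of_mem hu hv) (by simp [hx])
  simp only [Walk.length_cons, Walk.length_nil] at h
  linarith

lemma one_le_expWeight_of_two_paths {x y v₁ v₂ : V} (hu : u ∉ D) (hx : x ∉ D) (hy : y ∉ D)
    (hv₁ : v₁ ∈ D) (hv₂ : v₂ ∈ D) (hv : v₁ ≠ v₂) (hux : G.Adj u x) (hxv : G.Adj x v₁)
    (huy : G.Adj u y) (hyv : G.Adj y v₂) : 1 ≤ expWeight G D u := by
  classical
  have h₁ := half_le_halfPow_eDist_of_adj_of_adj hu hx hv₁ hux hxv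
  have h₂ := half_le_halfPow_eDist_of_adj_of_adj hu hy hv₂ huy hyv
  have hsub : ({v₁, v₂} : Finset V) ⊆ D := by simp [Finset.insert_subset_iff, hv₁, hv₂]
  have := Finset.sum_le_sum_of_subset_of_nonneg hsub
    (f := fun v => halfPow (eDist G D u v)) fun _ _ _ => halfPow_nonneg _
  rw [Finset.sum_pair hv] at this
  unfold expWeight
  linarith

lemma expDomNum_le_card [Fintype V] (hD : IsExpDomSet G D) : expDomNum G ≤ D.card :=
  Nat.sInf_le ⟨D, hD, rfl⟩

lemma le_domNum [Fintype V] {n : ℕ} (h : ∀ D : Finset V, IsDomSet G D → n ≤ D.card) :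
    n ≤ domNum G :=
  le_csInf ⟨_, Finset.univ, fun v hv => absurd (Finset.mem_univ v) hv, rfl⟩
    fun _ ⟨D, hD, hcard⟩ => hcard ▸ h D hD

instance [Fintype V] [DecidableEq V] [DecidableRel G.Adj] (D : Finset V) :
    Decidable (IsDomSet G D) := by
  unfold IsDomSet; infer_instance

end ExpDomination

instance : DecidableRel F5.Adj := fun a b =>
  decidable_of_iff' _ (fromRel_adj _ a b)

lemma isExpDomSet_F5 : IsExpDomSet F5 {0, 3} := by
  intro u
  fin_cases u
  · apply one_le_expWeight_of_mem; decide
  · apply one_le_expWeight_of_adj (v := 0) <;> decide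
  · apply one_le_expWeight_of_adj (v := 0) <;> decide
  · apply one_le_expWeight_of_mem; decide
  · apply one_le_expWeight_of_two_paths (x := 1) (y := 1) (v₁ := 0) (v₂ := 3) <;> decide
  · apply one_le_expWeight_of_two_paths (x := 2) (y := 2) (v₁ := 0) (v₂ := 3) <;> decide
  · apply one_le_expWeight_of_adj (v := 3) <;> decide

set_option maxRecDepth 20000 in
lemma three_le_card_of_isDomSet_F5 : ∀ D : Finset (Fin 7), IsDomSet F5 D → 3 ≤ D.card := by
  decide

/-- `γₑ(F₅) < γ(F₅)`. -/
theorem expDomNum_F5_lt_domNum_F5 : expDomNum F5 < domNum F5 :=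
  calc expDomNum F5 ≤ 2 := expDomNum_le_card isExpDomSet_F5
    _ < 3 := by norm_num
    _ ≤ domNum F5 := le_domNum three_le_card_of_isDomSet_F5
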